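/- arXiv:1605.06247 — 3 statements merged into one kernel-verified Lean document; each statement's English description precedes it below -/
import Mathlib

section
/- Let μ ∈ ℂ with 0 < |μ| < 1. For z in the open unit disk, one has the identity −Σ_{n=1}^∞ (zⁿ/n)·(1 + μⁿ/(1−μⁿ) + conj(μ)ⁿ/(1−conj(μ)ⁿ)) = log(1−z) + Σ_{k=1}^∞ log(1−μᵏ z) + Σ_{k=1}^∞ log(1−conj(μ)ᵏ z), where all series converge absolutely and log denotes the principal branch (each term 1−μᵏz lies in the right half-plane for k large). -/
open Complex

set_option maxHeartbeats 1000000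

lemma hasSum_shift' {u : ℂ} (hu : ‖u‖ < 1) :
    HasSum (fun n : ℕ => u ^ (n + 1) / ((n : ℂ) + 1)) (-Complex.log (1 - u)) := by
  have h := Complex.hasSum_taylorSeries_neg_log hu
  have h2 := (hasSum_nat_add_iff' (f := fun n : ℕ => u ^ n / (n : ℂ)) 1).mpr h
  simpa using h2

lemma aux' {w z : ℂ} (hw : ‖w‖ < 1) (hz : ‖z‖ < 1) :
    Summable (fun k : ℕ => Complex.log (1 - w ^ (k + 1) * z)) ∧
    HasSum (fun n : ℕ => z ^ (n + 1) / ((n : ℂ) + 1) * (w ^ (n + 1) / (1 - w ^ (n + 1))))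
      (-(∑' k : ℕ, Complex.log (1 - w ^ (k + 1) * z))) := by
  set f : ℕ × ℕ → ℂ := fun p => (w ^ (p.2 + 1) * z) ^ (p.1 + 1) / ((p.1 : ℂ) + 1) with hfdef
  have hwz : ∀ k : ℕ, ‖w ^ (k + 1) * z‖ < 1 := by
    intro k
    rw [norm_mul, norm_pow]
    calc ‖w‖ ^ (k + 1) * ‖z‖ ≤ 1 * ‖z‖ := by
          gcongr
          exact pow_le_one₀ (norm_nonneg w) hw.le
      _ = ‖z‖ := one_mul _
      _ < 1 := hz
  have hf : Summable f := by
    apply Summable.of_norm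
    have h1 : Summable (fun n : ℕ => ‖z‖ ^ (n + 1)) :=
      (summable_geometric_of_lt_one (norm_nonneg z) hz).comp_injective (add_left_injective 1)
    have h2 : Summable (fun k : ℕ => ‖w‖ ^ (k + 1)) :=
      (summable_geometric_of_lt_one (norm_nonneg w) hw).comp_injective (add_left_injective 1)
    refine Summable.of_nonneg_of_le (fun p => norm_nonneg _) ?_
      (h1.mul_of_nonneg h2 (fun n => pow_nonneg (norm_nonneg _) _)
        (fun n => pow_nonneg (norm_nonneg _) _))
    rintro ⟨n, k⟩
    have hden : (1 : ℝ) ≤ ‖((n : ℂ) + 1)‖ := by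
      have h : ((n : ℂ) + 1) = ((n + 1 : ℕ) : ℂ) := by push_cast; ring
      rw [h, Complex.norm_natCast]
      exact_mod_cast Nat.one_le_iff_ne_zero.mpr (Nat.succ_ne_zero n)
    calc ‖f (n, k)‖ = ‖(w ^ (k + 1) * z) ^ (n + 1)‖ / ‖((n : ℂ) + 1)‖ := by
          simp [f, norm_div]
      _ ≤ ‖(w ^ (k + 1) * z) ^ (n + 1)‖ / 1 := by gcongr
      _ = (‖w‖ ^ (k + 1)) ^ (n + 1) * ‖z‖ ^ (n + 1) := by
          rw [div_one, norm_pow, norm_mul, norm_pow, mul_pow]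
      _ ≤ ‖w‖ ^ (k + 1) * ‖z‖ ^ (n + 1) := by
          gcongr
          exact pow_le_of_le_one (pow_nonneg (norm_nonneg _) _)
            (pow_le_one₀ (norm_nonneg _) hw.le) (Nat.succ_ne_zero n)
      _ = ‖z‖ ^ (n + 1) * ‖w‖ ^ (k + 1) := mul_comm _ _
  have hrow : ∀ k : ℕ, HasSum (fun n => f (n, k)) (-(Complex.log (1 - w ^ (k + 1) * z))) := by
    intro k
    have h := hasSum_shift' (hwz k)
    exact h.congr_fun fun n => rfl
  have hcol : ∀ n : ℕ, HasSum (fun k => f (n, k))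
      (z ^ (n + 1) / ((n : ℂ) + 1) * (w ^ (n + 1) / (1 - w ^ (n + 1)))) := by
    intro n
    have hr : ‖w ^ (n + 1)‖ < 1 := by
      rw [norm_pow]
      exact pow_lt_one₀ (norm_nonneg w) hw (Nat.succ_ne_zero n)
    have hg := ((hasSum_geometric_of_norm_lt_one hr).mul_left (w ^ (n + 1))).mul_left
      (z ^ (n + 1) / ((n : ℂ) + 1))
    have heq : (fun k : ℕ => z ^ (n + 1) / ((n : ℂ) + 1) * (w ^ (n + 1) * (w ^ (n + 1)) ^ k))
        = fun k => f (n, k) := by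
      funext k
      simp only [f]
      rw [mul_pow, ← pow_succ', ← pow_mul, ← pow_mul, Nat.mul_comm]
      ring
    rw [heq, ← div_eq_mul_inv] at hg
    exact hg
  have hsum : HasSum f (∑' p, f p) := hf.hasSum
  have h1 : HasSum (fun n : ℕ => z ^ (n + 1) / ((n : ℂ) + 1) * (w ^ (n + 1) / (1 - w ^ (n + 1))))
      (∑' p, f p) := hsum.prod_fiberwise hcol
  have hswap : HasSum (fun p : ℕ × ℕ => f p.swap) (∑' p, f p) :=
    ((Equiv.prodComm ℕ ℕ).hasSum_iff).mpr hsum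
  have h2 : HasSum (fun k : ℕ => -(Complex.log (1 - w ^ (k + 1) * z))) (∑' p, f p) :=
    hswap.prod_fiberwise fun k => hrow k
  have h2' : HasSum (fun k : ℕ => Complex.log (1 - w ^ (k + 1) * z)) (-(∑' p, f p)) := by
    simpa using h2.neg
  refine ⟨h2'.summable, ?_⟩
  rw [h2'.tsum_eq, neg_neg]
  exact h1

/-- For `0 < |μ| < 1` and `z` in the open unit disk, the trace series of the Blaschke
transfer operator sums to the logarithm of the spectral determinant:
`-∑_{n≥1} (zⁿ/n)(1 + μⁿ/(1-μⁿ) + conj(μ)ⁿ/(1-conj(μ)ⁿ))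
  = log(1-z) + ∑_{k≥1} log(1-μᵏz) + ∑_{k≥1} log(1-conj(μ)ᵏz)`,
with all series converging absolutely (principal branch of log). -/
theorem stmt_7 (μ z : ℂ) (hμ0 : 0 < ‖μ‖) (hμ1 : ‖μ‖ < 1) (hz : ‖z‖ < 1) :
    Summable (fun n : ℕ => (z ^ (n + 1) / (n + 1)) *
        (1 + μ ^ (n + 1) / (1 - μ ^ (n + 1)) +
          ((starRingEnd ℂ) μ) ^ (n + 1) / (1 - ((starRingEnd ℂ) μ) ^ (n + 1)))) ∧
      Summable (fun k : ℕ => Complex.log (1 - μ ^ (k + 1) * z)) ∧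
      Summable (fun k : ℕ => Complex.log (1 - ((starRingEnd ℂ) μ) ^ (k + 1) * z)) ∧
      -(∑' n : ℕ, (z ^ (n + 1) / (n + 1)) *
          (1 + μ ^ (n + 1) / (1 - μ ^ (n + 1)) +
            ((starRingEnd ℂ) μ) ^ (n + 1) / (1 - ((starRingEnd ℂ) μ) ^ (n + 1)))) =
        Complex.log (1 - z) + (∑' k : ℕ, Complex.log (1 - μ ^ (k + 1) * z)) +
          ∑' k : ℕ, Complex.log (1 - ((starRingEnd ℂ) μ) ^ (k + 1) * z) := by
  have hμc : ‖(starRingEnd ℂ) μ‖ < 1 := by rwa [RCLike.norm_conj]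
  obtain ⟨hS1, hH1⟩ := aux' hμ1 hz
  obtain ⟨hS2, hH2⟩ := aux' hμc hz
  have hA : HasSum (fun n : ℕ => z ^ (n + 1) / ((n : ℂ) + 1)) (-Complex.log (1 - z)) :=
    hasSum_shift' hz
  have hmain : HasSum (fun n : ℕ => (z ^ (n + 1) / ((n : ℂ) + 1)) *
      (1 + μ ^ (n + 1) / (1 - μ ^ (n + 1)) +
        ((starRingEnd ℂ) μ) ^ (n + 1) / (1 - ((starRingEnd ℂ) μ) ^ (n + 1))))
      (-Complex.log (1 - z) + -(∑' k : ℕ, Complex.log (1 - μ ^ (k + 1) * z)) +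
        -(∑' k : ℕ, Complex.log (1 - ((starRingEnd ℂ) μ) ^ (k + 1) * z))) := by
    refine ((hA.add hH1).add hH2).congr_fun fun n => ?_
    ring
  refine ⟨hmain.summable, hS1, hS2, ?_⟩
  rw [hmain.tsum_eq]
  ring
end

section
/- Let μ ∈ (0,1). For z in the open unit disk define T_n = 1 if n is odd and T_n = 1 + 2μⁿ/(1−μⁿ) if n is even. Then exp(−Σ_{n=1}^∞ (zⁿ/n) T_n) = (1−z) ∏_{k=1}^∞ (1 − μ^{2k} z²), where the series and infinite product converge absolutely. -/
open Complex

/-!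
Since `Tₙ - 1` vanishes for odd `n`, `∑ (zⁿ/n) Tₙ = -log (1 - z) + ∑_{m≥1} (μ²z²)ᵐ / (m (1 - μ²ᵐ))`.
Expanding `1 / (1 - μ²ᵐ)` as a geometric series turns the second sum into the absolutely
convergent double series `∑_{j,m≥1} (μ²ʲ z²)ᵐ / m`; summing it in the other order gives
`-∑_j log (1 - μ²ʲ z²)`, and exponentiating yields the product.
-/

lemma one_sub_ne_zero_of_norm_lt_one {R : Type*} [NormedRing R] [NormOneClass R] {a : R}
    (ha : ‖a‖ < 1) : 1 - a ≠ 0 :=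
  sub_ne_zero.mpr fun h => ha.ne (by rw [← h, norm_one])

noncomputable def logProdTerm (q x : ℂ) (p : ℕ × ℕ) : ℂ :=
  (q ^ (p.1 + 1) * x) ^ (p.2 + 1) / (p.2 + 1)

section LogProd

variable {q x : ℂ}

lemma norm_pow_succ_mul_lt_one (hq : ‖q‖ < 1) (hx : ‖x‖ ≤ 1) (j : ℕ) :
    ‖q ^ (j + 1) * x‖ < 1 := by
  rw [norm_mul, norm_pow]
  calc ‖q‖ ^ (j + 1) * ‖x‖ ≤ ‖q‖ ^ (j + 1) := mul_le_of_le_one_right (by positivity) hx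
    _ < 1 := pow_lt_one₀ (norm_nonneg q) hq j.succ_ne_zero

lemma norm_logProdTerm_le (hq : ‖q‖ < 1) (hx : ‖x‖ ≤ 1) (p : ℕ × ℕ) :
    ‖logProdTerm q x p‖ ≤ ‖q‖ ^ p.1 * ‖q‖ ^ p.2 := by
  obtain ⟨j, m⟩ := p
  have hq0 := norm_nonneg q
  have hden : (1 : ℝ) ≤ ‖(m : ℂ) + 1‖ := by
    rw [← Nat.cast_succ, Complex.norm_natCast]
    exact_mod_cast m.succ_pos
  calc ‖logProdTerm q x (j, m)‖ ≤ ‖q ^ (j + 1) * x‖ ^ (m + 1) := by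
        rw [logProdTerm, norm_div, norm_pow]
        exact div_le_self (by positivity) hden
    _ ≤ (‖q‖ ^ (j + 1)) ^ (m + 1) := by
        gcongr
        rw [norm_mul, norm_pow]
        exact mul_le_of_le_one_right (by positivity) hx
    _ ≤ ‖q‖ ^ (j + m) := by
        rw [← pow_mul]
        exact pow_le_pow_of_le_one hq0 hq.le (by nlinarith)
    _ = ‖q‖ ^ j * ‖q‖ ^ m := pow_add _ _ _

lemma summable_logProdTerm (hq : ‖q‖ < 1) (hx : ‖x‖ ≤ 1) : Summable (logProdTerm q x) := by
  have hgeom : Summable fun n : ℕ => ‖q‖ ^ n :=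
    summable_geometric_of_lt_one (norm_nonneg q) hq
  exact .of_norm_bounded (hgeom.mul_of_nonneg hgeom (fun _ => by positivity)
    (fun _ => by positivity)) (norm_logProdTerm_le hq hx)

lemma hasSum_neg_log_one_sub_pow_succ_mul (hq : ‖q‖ < 1) (hx : ‖x‖ ≤ 1) :
    HasSum (fun j : ℕ => -log (1 - q ^ (j + 1) * x)) (∑' p, logProdTerm q x p) :=
  (summable_logProdTerm hq hx).hasSum.prod_fiberwise fun j =>
    (hasSum_taylorSeries_neg_log' (norm_pow_succ_mul_lt_one hq hx j) :)

lemma hasSum_lambert (hq : ‖q‖ < 1) (hx : ‖x‖ ≤ 1) :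
    HasSum (fun m : ℕ => (q * x) ^ (m + 1) / ((m + 1) * (1 - q ^ (m + 1))))
      (∑' p, logProdTerm q x p) := by
  have hswap := (Equiv.prodComm ℕ ℕ).hasSum_iff.mpr (summable_logProdTerm hq hx).hasSum
  refine hswap.prod_fiberwise fun m => ?_
  have hgeom := (hasSum_geometric_of_norm_lt_one
    (by simpa only [mul_one] using norm_pow_succ_mul_lt_one hq (norm_one.le) m)).mul_left
    ((q * x) ^ (m + 1) / (m + 1))
  rw [div_mul_eq_div_div, div_eq_mul_inv _ (1 - _)]
  refine hgeom.congr_fun fun j => ?_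
  simp only [Function.comp_apply, Equiv.prodComm_apply, Prod.swap_prod_mk, logProdTerm]
  rw [mul_pow, mul_pow, ← pow_mul, ← pow_mul,
    show (j + 1) * (m + 1) = (m + 1) + (m + 1) * j by ring, pow_add]
  ring

lemma hasProd_one_sub_pow_succ_mul (hq : ‖q‖ < 1) (hx : ‖x‖ ≤ 1) :
    HasProd (fun j : ℕ => 1 - q ^ (j + 1) * x) (exp (-∑' p, logProdTerm q x p)) := by
  have hlog := (hasSum_neg_log_one_sub_pow_succ_mul hq hx).neg.cexp
  refine hlog.congr_fun fun j => ?_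
  simp only [Function.comp_apply, neg_neg,
    exp_log (one_sub_ne_zero_of_norm_lt_one (norm_pow_succ_mul_lt_one hq hx j))]

end LogProd

lemma hasSum_pow_succ_div_mul_weight {μ z : ℂ} (hμ : ‖μ‖ < 1) (hz : ‖z‖ < 1) (T : ℕ → ℂ)
    (hT : ∀ n : ℕ, T n = if n % 2 = 1 then 1 else 1 + 2 * μ ^ n / (1 - μ ^ n)) :
    HasSum (fun n : ℕ => z ^ (n + 1) / (n + 1) * T (n + 1))
      (-log (1 - z) + ∑' p, logProdTerm (μ ^ 2) (z ^ 2) p) := by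
  have hμ2 : ‖μ ^ 2‖ < 1 := by rw [norm_pow]; exact pow_lt_one₀ (norm_nonneg _) hμ two_ne_zero
  have hz2 : ‖z ^ 2‖ ≤ 1 := by rw [norm_pow]; exact pow_le_one₀ (norm_nonneg _) hz.le
  have hodd : HasSum (fun n : ℕ => z ^ (n + 1) / (n + 1) * (T (n + 1) - 1))
      (0 + ∑' p, logProdTerm (μ ^ 2) (z ^ 2) p) := by
    refine HasSum.even_add_odd (hasSum_zero.congr_fun fun k => ?_) ?_
    · rw [hT, if_pos (by omega), sub_self, mul_zero]
    · refine (hasSum_lambert hμ2 hz2).congr_fun fun k => ?_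
      have hne : 1 - μ ^ (2 * (k + 1)) ≠ 0 := one_sub_ne_zero_of_norm_lt_one <| by
        rw [norm_pow]; exact pow_lt_one₀ (norm_nonneg μ) hμ (by omega)
      have hden : ((2 * k + 1 : ℕ) : ℂ) + 1 = 2 * ((k : ℂ) + 1) := by push_cast; ring
      rw [hT, if_neg (by omega), show 2 * k + 1 + 1 = 2 * (k + 1) by ring, mul_pow, ← pow_mul,
        ← pow_mul, hden]
      field_simp
      ring
  convert (hasSum_taylorSeries_neg_log' hz).add hodd using 1
  · ext n
    ring
  · rw [zero_add]

/-- For `μ ∈ (0,1)` and `z` in the open unit disk, with `T_n = 1` for odd `n` and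
`T_n = 1 + 2μⁿ/(1-μⁿ)` for even `n`, one has
`exp(-∑_{n≥1} (zⁿ/n) T_n) = (1-z) ∏_{k≥1} (1 - μ^{2k} z²)`,
the series and product converging absolutely. -/
theorem stmt_8 (μ : ℝ) (hμ0 : 0 < μ) (hμ1 : μ < 1) (z : ℂ) (hz : ‖z‖ < 1)
    (T : ℕ → ℂ)
    (hT : ∀ n : ℕ, T n = if n % 2 = 1 then 1 else 1 + 2 * (μ : ℂ) ^ n / (1 - (μ : ℂ) ^ n)) :
    Summable (fun n : ℕ => z ^ (n + 1) / (n + 1) * T (n + 1)) ∧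
      Multipliable (fun k : ℕ => 1 - (μ : ℂ) ^ (2 * (k + 1)) * z ^ 2) ∧
      Complex.exp (-(∑' n : ℕ, z ^ (n + 1) / (n + 1) * T (n + 1))) =
        (1 - z) * ∏' k : ℕ, (1 - (μ : ℂ) ^ (2 * (k + 1)) * z ^ 2) := by
  have hμ : ‖(μ : ℂ)‖ < 1 := by rw [norm_real, Real.norm_of_nonneg hμ0.le]; exact hμ1
  have hseries := hasSum_pow_succ_div_mul_weight hμ hz T hT
  have hprod : HasProd (fun k : ℕ => 1 - (μ : ℂ) ^ (2 * (k + 1)) * z ^ 2)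
      (exp (-∑' p, logProdTerm ((μ : ℂ) ^ 2) (z ^ 2) p)) := by
    have := hasProd_one_sub_pow_succ_mul (q := (μ : ℂ) ^ 2) (x := z ^ 2)
      (by rw [norm_pow]; exact pow_lt_one₀ (norm_nonneg _) hμ two_ne_zero)
      (by rw [norm_pow]; exact pow_le_one₀ (norm_nonneg z) hz.le)
    simpa only [← pow_mul] using this
  refine ⟨hseries.summable, hprod.multipliable, ?_⟩
  rw [hseries.tsum_eq, hprod.tprod_eq, neg_add, neg_neg, exp_add,
    exp_log (one_sub_ne_zero_of_norm_lt_one hz)]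
end

section
/- Let (λ_n)_{n≥1} be a sequence of complex numbers with |λ_n| ≤ C·exp(−α n^β) for some C, α > 0 and β ≥ 1. Then there exists a constant K such that for all ζ ∈ ℂ with |ζ| sufficiently large, Σ_{n=1}^∞ log(1 + C e^{|ζ|} e^{−α n^β}) ≤ K |ζ|^{1/β + 1}. In particular, log|∏_{n≥1}(1 − e^ζ λ_n)| = O(|ζ|^{1/β + 1}) as |ζ| → ∞. -/
/-!
Each factor satisfies `‖1 - e^ζ λ_n‖ ≤ 1 + w_n` with `w_n = C e^{|ζ|} e^{-α (n+1)^β}`, so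
`log |∏ (1 - e^ζ λ_n)| ≤ ∑ log (1 + w_n)`. Split this sum at `N = ⌈(2|ζ|/α)^{1/β}⌉`. Each of the
first `N` terms is at most `log (1 + C) + |ζ|`, which gives `O(|ζ|^{1/β + 1})`. For `n ≥ N` one
has `α (n+1)^β ≥ 2|ζ|`, hence `w_n ≤ C e^{-α n / 2}`, and the tail is bounded by a geometric
series independent of `ζ`.
-/

section Product

variable {R : Type*} [NormedCommRing R] [NormOneClass R] {w : ℕ → R} {c : ℕ → ℝ}

theorem norm_tprod_one_sub_le_exp_tsum (hw : ∀ n, ‖w n‖ ≤ c n) (hc : Summable c) :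
    ‖∏' n, (1 - w n)‖ ≤ Real.exp (∑' n, Real.log (1 + c n)) := by
  have hc0 : ∀ n, 0 ≤ c n := fun n => (norm_nonneg _).trans (hw n)
  have hlog0 : ∀ n, 0 ≤ Real.log (1 + c n) := fun n => Real.log_nonneg (by linarith [hc0 n])
  have hlog : Summable fun n => Real.log (1 + c n) := Real.summable_log_one_add_of_summable hc
  have hpartial : ∀ m, ‖∏ n ∈ Finset.range m, (1 - w n)‖ ≤ Real.exp (∑' n, Real.log (1 + c n)) := by
    intro m
    calc ‖∏ n ∈ Finset.range m, (1 - w n)‖ ≤ ∏ n ∈ Finset.range m, ‖1 - w n‖ :=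
          Finset.norm_prod_le _ _
      _ ≤ ∏ n ∈ Finset.range m, Real.exp (Real.log (1 + c n)) := by
          gcongr with n
          rw [Real.exp_log (by linarith [hc0 n])]
          exact (norm_sub_le _ _).trans (by rw [norm_one]; linarith [hw n])
      _ = Real.exp (∑ n ∈ Finset.range m, Real.log (1 + c n)) := (Real.exp_sum _ _).symm
      _ ≤ Real.exp (∑' n, Real.log (1 + c n)) :=
          Real.exp_le_exp.mpr (hlog.sum_le_tsum _ fun n _ => hlog0 n)
  by_cases hmul : Multipliable fun n => 1 - w n
  · exact le_of_tendsto hmul.hasProd.tendsto_prod_nat.norm (.of_forall hpartial)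
  · rw [tprod_eq_one_of_not_multipliable hmul, norm_one]
    exact Real.one_le_exp (tsum_nonneg hlog0)

theorem log_norm_tprod_one_sub_le_tsum (hw : ∀ n, ‖w n‖ ≤ c n) (hc : Summable c) :
    Real.log ‖∏' n, (1 - w n)‖ ≤ ∑' n, Real.log (1 + c n) := by
  rcases (norm_nonneg (∏' n, (1 - w n))).eq_or_lt with h | h
  · rw [← h, Real.log_zero]
    exact tsum_nonneg fun n => Real.log_nonneg (by linarith [(norm_nonneg _).trans (hw n)])
  · exact (Real.log_le_iff_le_exp h).mpr (norm_tprod_one_sub_le_exp_tsum hw hc)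

end Product

theorem natCeil_mul_rpow_le {a r p : ℝ} (ha : 0 ≤ a) (hr : 1 ≤ r) (hp : 0 ≤ p) :
    (⌈(a * r) ^ p⌉₊ : ℝ) ≤ (a ^ p + 1) * r ^ p := by
  have hceil := Nat.ceil_lt_add_one (Real.rpow_nonneg (mul_nonneg ha (zero_le_one.trans hr)) p)
  rw [Real.mul_rpow ha (zero_le_one.trans hr)] at hceil ⊢
  nlinarith [Real.one_le_rpow hr hp]

noncomputable def expDecayWeight (C α β r : ℝ) (n : ℕ) : ℝ :=
  C * Real.exp r * Real.exp (-α * ((n + 1 : ℕ) : ℝ) ^ β)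

section Weight

variable {C α β r : ℝ}

theorem exp_neg_mul_rpow_le_pow (hα : 0 ≤ α) (hβ : 1 ≤ β) (n : ℕ) :
    Real.exp (-α * ((n + 1 : ℕ) : ℝ) ^ β) ≤ Real.exp (-α) ^ (n + 1) := by
  rw [← Real.exp_nat_mul, Real.exp_le_exp, mul_comm]
  exact mul_le_mul_of_nonpos_right (Real.self_le_rpow_of_one_le (by simp) hβ) (by linarith)

theorem summable_expDecayWeight (hα : 0 < α) (hβ : 1 ≤ β) :
    Summable (expDecayWeight C α β r) := by
  have hq := Real.exp_lt_one_iff.mpr (neg_lt_zero.mpr hα)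
  have hgeom := (summable_geometric_of_lt_one (Real.exp_nonneg (-α)) hq).comp_injective
    (add_left_injective 1)
  exact (hgeom.of_nonneg_of_le (fun n => (Real.exp_pos _).le)
    (exp_neg_mul_rpow_le_pow hα.le hβ)).mul_left _

theorem log_one_add_expDecayWeight_le (hC : 0 ≤ C) (hα : 0 ≤ α) (hβ : 1 ≤ β) (hr : 0 ≤ r)
    (n : ℕ) : Real.log (1 + expDecayWeight C α β r n) ≤ Real.log (1 + C) + r := by
  have hdecay : Real.exp (-α * ((n + 1 : ℕ) : ℝ) ^ β) ≤ 1 :=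
    (exp_neg_mul_rpow_le_pow hα hβ n).trans
      (pow_le_one₀ (Real.exp_nonneg _) (Real.exp_le_one_iff.mpr (by linarith)))
  have hbound : 1 + expDecayWeight C α β r n ≤ (1 + C) * Real.exp r := by
    have := Real.one_le_exp hr
    have : expDecayWeight C α β r n ≤ C * Real.exp r :=
      mul_le_of_le_one_right (by positivity) hdecay
    nlinarith
  calc Real.log (1 + expDecayWeight C α β r n) ≤ Real.log ((1 + C) * Real.exp r) :=
        Real.log_le_log (by unfold expDecayWeight; positivity) hbound
    _ = Real.log (1 + C) + r := by
        rw [Real.log_mul (by linarith) (Real.exp_ne_zero _), Real.log_exp]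

theorem expDecayWeight_le_of_le (hC : 0 ≤ C) (hα : 0 < α) (hβ : 1 ≤ β) (hr : 0 ≤ r) {n : ℕ}
    (hn : (2 / α * r) ^ (1 / β) ≤ n) :
    expDecayWeight C α β r n ≤ C * Real.exp (-(α / 2)) ^ n := by
  set m : ℝ := ((n + 1 : ℕ) : ℝ)
  have hnm : (n : ℝ) ≤ m := by simp [m]
  have hm : 2 / α * r ≤ m ^ β := by
    rw [one_div] at hn
    exact (Real.rpow_inv_le_iff_of_pos (by positivity) (by positivity)
      (by linarith)).mp (hn.trans hnm)
  have hmβ : m ≤ m ^ β := Real.self_le_rpow_of_one_le (by simp [m]) hβ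
  have hexp : r + -α * m ^ β ≤ n * -(α / 2) := by
    rw [div_mul_eq_mul_div, div_le_iff₀ hα] at hm
    nlinarith
  rw [expDecayWeight, mul_assoc, ← Real.exp_add, ← Real.exp_nat_mul]
  exact mul_le_mul_of_nonneg_left (Real.exp_le_exp.mpr hexp) hC

theorem sum_range_log_one_add_expDecayWeight_le (hC : 0 ≤ C) (hα : 0 ≤ α) (hβ : 1 ≤ β)
    (hr : 0 ≤ r) (N : ℕ) :
    ∑ n ∈ Finset.range N, Real.log (1 + expDecayWeight C α β r n) ≤
      N * (Real.log (1 + C) + r) := by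
  have := Finset.sum_le_card_nsmul (Finset.range N) _ _ fun n _ =>
    log_one_add_expDecayWeight_le hC hα hβ hr n
  rwa [Finset.card_range, nsmul_eq_mul] at this

theorem tsum_log_one_add_expDecayWeight_nat_add_le (hC : 0 ≤ C) (hα : 0 < α) (hβ : 1 ≤ β)
    (hr : 0 ≤ r) {N : ℕ} (hN : (2 / α * r) ^ (1 / β) ≤ N) :
    ∑' n, Real.log (1 + expDecayWeight C α β r (n + N)) ≤ C / (1 - Real.exp (-(α / 2))) := by
  set q := Real.exp (-(α / 2))
  have hq0 : 0 ≤ q := Real.exp_nonneg _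
  have hq1 : q < 1 := Real.exp_lt_one_iff.mpr (by linarith)
  have hterm (n : ℕ) : Real.log (1 + expDecayWeight C α β r (n + N)) ≤ C * q ^ n :=
    calc Real.log (1 + expDecayWeight C α β r (n + N))
        ≤ expDecayWeight C α β r (n + N) := by
          have hw : 0 ≤ expDecayWeight C α β r (n + N) := by unfold expDecayWeight; positivity
          simpa using Real.log_le_sub_one_of_pos (x := 1 + expDecayWeight C α β r (n + N))
            (by linarith)
      _ ≤ C * q ^ (n + N) := by
          refine expDecayWeight_le_of_le hC hα hβ hr ?_
          push_cast
          linarith [n.cast_nonneg (α := ℝ)]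
      _ ≤ C * q ^ n :=
          mul_le_mul_of_nonneg_left (pow_le_pow_of_le_one hq0 hq1.le (Nat.le_add_right n N)) hC
  have hsummable : Summable fun n => Real.log (1 + expDecayWeight C α β r (n + N)) :=
    (summable_nat_add_iff N).mpr
      (Real.summable_log_one_add_of_summable (summable_expDecayWeight hα hβ))
  calc ∑' n, Real.log (1 + expDecayWeight C α β r (n + N)) ≤ ∑' n, C * q ^ n :=
        hsummable.tsum_le_tsum hterm ((summable_geometric_of_lt_one hq0 hq1).mul_left C)
    _ = C / (1 - q) := by rw [tsum_mul_left, tsum_geometric_of_lt_one hq0 hq1]; ring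

theorem tsum_log_one_add_expDecayWeight_le (hC : 0 ≤ C) (hα : 0 < α) (hβ : 1 ≤ β) :
    ∃ K, ∀ r, 1 ≤ r →
      ∑' n, Real.log (1 + expDecayWeight C α β r n) ≤ K * r ^ (1 / β + 1) := by
  set A := (2 / α) ^ (1 / β) + 1
  set B := Real.log (1 + C) + 1
  set T := C / (1 - Real.exp (-(α / 2)))
  have hT : 0 ≤ T :=
    div_nonneg hC (sub_nonneg.mpr (Real.exp_le_one_iff.mpr (by linarith)))
  refine ⟨A * B + T, fun r hr => ?_⟩
  set N := ⌈(2 / α * r) ^ (1 / β)⌉₊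
  have hr0 : 0 ≤ r := by linarith
  have hp : 0 ≤ 1 / β := by positivity
  have hlogC : 0 ≤ Real.log (1 + C) := Real.log_nonneg (by linarith)
  have hhead : ∑ n ∈ Finset.range N, Real.log (1 + expDecayWeight C α β r n) ≤
      A * B * r ^ (1 / β + 1) :=
    calc _ ≤ N * (Real.log (1 + C) + r) :=
          sum_range_log_one_add_expDecayWeight_le hC hα.le hβ hr0 N
      _ ≤ A * r ^ (1 / β) * (B * r) :=
          mul_le_mul (natCeil_mul_rpow_le (by positivity) hr hp) (by nlinarith)
            (by positivity) (by positivity)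
      _ = A * B * r ^ (1 / β + 1) := by rw [Real.rpow_add (by linarith), Real.rpow_one]; ring
  have htail := tsum_log_one_add_expDecayWeight_nat_add_le hC hα hβ hr0 (Nat.le_ceil _)
  have hT_le : T ≤ T * r ^ (1 / β + 1) :=
    le_mul_of_one_le_right hT (Real.one_le_rpow hr (by linarith))
  have hsummable : Summable fun n => Real.log (1 + expDecayWeight C α β r n) :=
    Real.summable_log_one_add_of_summable (summable_expDecayWeight hα hβ)
  rw [← hsummable.sum_add_tsum_nat_add N]
  linarith

end Weight

/-- If `|λ_n| ≤ C exp(-α n^β)` with `C, α > 0`, `β ≥ 1`, then for `|ζ|` large,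
`∑_{n≥1} log(1 + C e^{|ζ|} e^{-α n^β}) ≤ K |ζ|^{1/β+1}`; in particular
`log|∏_{n≥1} (1 - e^ζ λ_n)| = O(|ζ|^{1/β+1})` as `|ζ| → ∞`. -/
theorem stmt_9 (C α β : ℝ) (hC : 0 < C) (hα : 0 < α) (hβ : 1 ≤ β) (lam : ℕ → ℂ)
    (hlam : ∀ n : ℕ, ‖lam n‖ ≤ C * Real.exp (-α * ((n + 1 : ℕ) : ℝ) ^ β)) :
    ∃ K R₀ : ℝ, ∀ ζ : ℂ, R₀ ≤ ‖ζ‖ →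
      (∑' n : ℕ, Real.log (1 + C * Real.exp ‖ζ‖ *
          Real.exp (-α * ((n + 1 : ℕ) : ℝ) ^ β))) ≤ K * ‖ζ‖ ^ (1 / β + 1) ∧
      Real.log ‖∏' n : ℕ, (1 - Complex.exp ζ * lam n)‖ ≤ K * ‖ζ‖ ^ (1 / β + 1) := by
  obtain ⟨K, hK⟩ := tsum_log_one_add_expDecayWeight_le hC.le hα hβ
  refine ⟨K, 1, fun ζ hζ => ⟨hK ‖ζ‖ hζ, ?_⟩⟩
  have hw : ∀ n, ‖Complex.exp ζ * lam n‖ ≤ expDecayWeight C α β ‖ζ‖ n := fun n => by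
    rw [norm_mul, Complex.norm_exp, expDecayWeight, mul_comm C, mul_assoc]
    exact mul_le_mul (Real.exp_le_exp.mpr (Complex.re_le_norm ζ)) (hlam n) (norm_nonneg _)
      (Real.exp_nonneg _)
  exact (log_norm_tprod_one_sub_le_tsum hw (summable_expDecayWeight hα hβ)).trans (hK ‖ζ‖ hζ)
end
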